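/- arXiv:2503.01267 — 3 statements merged into one kernel-verified Lean document; each statement's English description precedes it below -/
import Mathlib

section
/- Let u : ℝ × ℝ → ℝ be three times continuously differentiable, and set m := u − ∂_x∂_x u, q := √(m² + 1), v := u² − (∂_x u)². Then at every point (x,t) the identity ∂_t q + ∂_x(q·v) = (m/q)·( ∂_t m + ∂_x(v·m) + 2·∂_x u ) holds. -/
lemma sliceX_hasDerivAt (f : ℝ × ℝ → ℝ) (hf : Differentiable ℝ f) (p : ℝ × ℝ) :
    HasDerivAt (fun x => f (x, p.2)) (fderiv ℝ f p (1, 0)) p.1 := by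
  have hline : HasDerivAt (fun x : ℝ => ((x, p.2) : ℝ × ℝ)) ((1 : ℝ), (0 : ℝ)) p.1 :=
    HasDerivAt.prodMk (hasDerivAt_id p.1) (hasDerivAt_const p.1 p.2)
  have h := ((hf p).hasFDerivAt).comp_hasDerivAt p.1 (by simpa using hline)
  exact h

lemma sliceT_hasDerivAt (f : ℝ × ℝ → ℝ) (hf : Differentiable ℝ f) (p : ℝ × ℝ) :
    HasDerivAt (fun t => f (p.1, t)) (fderiv ℝ f p (0, 1)) p.2 := by
  have hline : HasDerivAt (fun t : ℝ => ((p.1, t) : ℝ × ℝ)) ((0 : ℝ), (1 : ℝ)) p.2 :=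
    HasDerivAt.prodMk (hasDerivAt_const p.2 p.1) (hasDerivAt_id p.2)
  have h := ((hf p).hasFDerivAt).comp_hasDerivAt p.2 (by simpa using hline)
  exact h

/-- Partial derivative in the first (spatial) variable. -/
noncomputable def pX (f : ℝ × ℝ → ℝ) : ℝ × ℝ → ℝ :=
  fun p => deriv (fun x => f (x, p.2)) p.1

/-- Partial derivative in the second (time) variable. -/
noncomputable def pT (f : ℝ × ℝ → ℝ) : ℝ × ℝ → ℝ :=
  fun p => deriv (fun t => f (p.1, t)) p.2

/-- The momentum variable m = u - u_xx. -/
noncomputable def mOf (u : ℝ × ℝ → ℝ) : ℝ × ℝ → ℝ :=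
  fun p => u p - pX (pX u) p

/-- q = √(m² + 1). -/
noncomputable def qOf (u : ℝ × ℝ → ℝ) : ℝ × ℝ → ℝ :=
  fun p => Real.sqrt ((mOf u p) ^ 2 + 1)

/-- v = u² - u_x². -/
noncomputable def vOf (u : ℝ × ℝ → ℝ) : ℝ × ℝ → ℝ :=
  fun p => u p ^ 2 - (pX u p) ^ 2

/-- the pointwise identity
`q_t + (q·v)_x = (m/q)·(m_t + (v·m)_x + 2 u_x)` for any C³ function u,
where m = u - u_xx, q = √(m²+1), v = u² - u_x². -/
theorem mCH_conservation_identity (u : ℝ × ℝ → ℝ) (hu : ContDiff ℝ 3 u) :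
    ∀ p : ℝ × ℝ,
      pT (qOf u) p + pX (fun p' => qOf u p' * vOf u p') p
        = (mOf u p / qOf u p)
          * (pT (mOf u) p + pX (fun p' => vOf u p' * mOf u p') p + 2 * pX u p) := by
  intro p
  have hud : Differentiable ℝ u := hu.differentiable (by norm_num)
  set g : ℝ × ℝ → ℝ := fun p => fderiv ℝ u p (1, 0) with hgdef
  have hg : ContDiff ℝ 2 g := (hu.fderiv_right (by norm_num)).clm_apply contDiff_const
  have hgd : Differentiable ℝ g := hg.differentiable (by norm_num)
  have hpxu : pX u = g := funext fun p' => (sliceX_hasDerivAt u hud p').deriv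
  set h : ℝ × ℝ → ℝ := fun p => fderiv ℝ g p (1, 0) with hhdef
  have hh : ContDiff ℝ 1 h := (hg.fderiv_right (by norm_num)).clm_apply contDiff_const
  have hm : mOf u = fun p => u p - h p := by
    funext p'
    simp only [mOf, hpxu]
    rw [show pX g p' = h p' from (sliceX_hasDerivAt g hgd p').deriv]
  have hMd : Differentiable ℝ (mOf u) := by
    rw [hm]; exact hud.sub (hh.differentiable (by norm_num))
  have hVeq : vOf u = fun p' => u p' ^ 2 - g p' ^ 2 := by
    funext p'; simp [vOf, hpxu]
  have hVd : Differentiable ℝ (vOf u) := by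
    rw [hVeq]; exact (hud.pow 2).sub (hgd.pow 2)
  set m0 := mOf u p with hm0
  set v0 := vOf u p with hv0
  set q0 := qOf u p with hq0def
  set uX := fderiv ℝ u p (1, 0) with huXdef
  set mX := fderiv ℝ (mOf u) p (1, 0) with hmXdef
  set mT := fderiv ℝ (mOf u) p (0, 1) with hmTdef
  have hpos : (0:ℝ) < m0 ^ 2 + 1 := by positivity
  have hq0pos : 0 < q0 := Real.sqrt_pos.mpr hpos
  have hq0ne : q0 ≠ 0 := ne_of_gt hq0pos
  have hq2 : q0 ^ 2 = m0 ^ 2 + 1 := Real.sq_sqrt hpos.le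
  have hgp : g p = uX := rfl
  have hhp : h p = u p - m0 := by
    have : m0 = u p - h p := by rw [hm0, hm]
    linarith
  -- slice derivatives
  have hmX : HasDerivAt (fun x => mOf u (x, p.2)) mX p.1 := sliceX_hasDerivAt _ hMd p
  have hmT : HasDerivAt (fun t => mOf u (p.1, t)) mT p.2 := sliceT_hasDerivAt _ hMd p
  have huX : HasDerivAt (fun x => u (x, p.2)) uX p.1 := sliceX_hasDerivAt _ hud p
  have hgX : HasDerivAt (fun x => g (x, p.2)) (h p) p.1 := sliceX_hasDerivAt _ hgd p
  -- q slices
  have hqX : HasDerivAt (fun x => qOf u (x, p.2)) (m0 * mX / q0) p.1 := by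
    have h1 : HasDerivAt (fun x => (mOf u (x, p.2)) ^ 2 + 1) (2 * m0 * mX) p.1 := by
      have := (hmX.pow 2).add_const 1
      simpa [Prod.mk.eta, hm0] using this
    have h2 := h1.sqrt (by simp only [Prod.mk.eta]; positivity)
    have heq : (2 * m0 * mX) / (2 * Real.sqrt ((mOf u (p.1, p.2)) ^ 2 + 1)) = m0 * mX / q0 := by
      rw [show Real.sqrt ((mOf u (p.1, p.2)) ^ 2 + 1) = q0 by
        simp [Prod.mk.eta, hq0def, qOf, hm0]]
      ring
    rw [← heq]
    exact h2
  have hqT : HasDerivAt (fun t => qOf u (p.1, t)) (m0 * mT / q0) p.2 := by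
    have h1 : HasDerivAt (fun t => (mOf u (p.1, t)) ^ 2 + 1) (2 * m0 * mT) p.2 := by
      have := (hmT.pow 2).add_const 1
      simpa [Prod.mk.eta, hm0] using this
    have h2 := h1.sqrt (by simp only [Prod.mk.eta]; positivity)
    have heq : (2 * m0 * mT) / (2 * Real.sqrt ((mOf u (p.1, p.2)) ^ 2 + 1)) = m0 * mT / q0 := by
      rw [show Real.sqrt ((mOf u (p.1, p.2)) ^ 2 + 1) = q0 by
        simp [Prod.mk.eta, hq0def, qOf, hm0]]
      ring
    rw [← heq]
    exact h2
  -- v slice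
  have hvX : HasDerivAt (fun x => vOf u (x, p.2)) (2 * uX * m0) p.1 := by
    have h1 := (huX.fun_pow 2).fun_sub (hgX.fun_pow 2)
    have heq : (fun x => vOf u (x, p.2)) = fun x => u (x, p.2) ^ 2 - g (x, p.2) ^ 2 := by
      funext x; rw [hVeq]
    rw [heq]
    refine h1.congr_deriv ?_
    simp only [Prod.mk.eta, hgp]
    push_cast
    rw [hhp]; ring
  -- the five derivative values
  have e1 : pT (qOf u) p = m0 * mT / q0 := hqT.deriv
  have e2 : pX (fun p' => qOf u p' * vOf u p') p
      = m0 * mX / q0 * v0 + q0 * (2 * uX * m0) := by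
    have := hqX.fun_mul hvX
    have e : qOf u (p.1, p.2) = q0 := by rw [hq0def]
    have e' : vOf u (p.1, p.2) = v0 := by rw [hv0]
    simp only [Prod.mk.eta] at this
    simpa [hq0def, hv0, pX] using this.deriv
  have e3 : pT (mOf u) p = mT := hmT.deriv
  have e4 : pX (fun p' => vOf u p' * mOf u p') p = 2 * uX * m0 * m0 + v0 * mX := by
    have := hvX.fun_mul hmX
    simp only [Prod.mk.eta] at this
    simpa [hv0, hm0, pX] using this.deriv
  have e5 : pX u p = uX := huX.deriv
  rw [show pT (qOf u) p = m0 * mT / q0 from e1, e3, e5]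
  rw [show pX (fun p' => qOf u p' * vOf u p') p = m0 * mX / q0 * v0 + q0 * (2 * uX * m0) from e2]
  rw [show pX (fun p' => vOf u p' * mOf u p') p = 2 * uX * m0 * m0 + v0 * mX from e4]
  field_simp
  linear_combination (2 * m0 * uX) * hq2
end

section
/- Let u : ℝ × ℝ → ℝ be three times continuously differentiable and satisfy the mCH equation with ω = 2, i.e. ∂_t m + ∂_x((u² − (∂_x u)²)·m) + 2·∂_x u = 0 everywhere, where m = u − ∂_x∂_x u. Then q := √(m² + 1) satisfies the conservation law ∂_t q + ∂_x( q·(u² − (∂_x u)²) ) = 0 at every point (x,t). -/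
lemma hasDerivAt_pX (f : ℝ × ℝ → ℝ) (x t : ℝ) (hf : DifferentiableAt ℝ f (x, t)) :
    HasDerivAt (fun x' => f (x', t)) (pX f (x, t)) x := by
  have hc : HasDerivAt (fun x' : ℝ => ((x' : ℝ), t)) ((1 : ℝ), (0 : ℝ)) x :=
    (hasDerivAt_id x).prodMk (hasDerivAt_const x t)
  have h := hf.hasFDerivAt.comp_hasDerivAt x hc
  have hd : pX f (x, t) = fderiv ℝ f (x, t) (1, 0) := h.deriv
  rw [show (pX f (x, t)) = fderiv ℝ f (x, t) (1, 0) from hd]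
  exact h

lemma hasDerivAt_pT (f : ℝ × ℝ → ℝ) (x t : ℝ) (hf : DifferentiableAt ℝ f (x, t)) :
    HasDerivAt (fun t' => f (x, t')) (pT f (x, t)) t := by
  have hc : HasDerivAt (fun t' : ℝ => ((x : ℝ), t')) ((0 : ℝ), (1 : ℝ)) t :=
    (hasDerivAt_const t x).prodMk (hasDerivAt_id t)
  have h := hf.hasFDerivAt.comp_hasDerivAt t hc
  have hd : pT f (x, t) = fderiv ℝ f (x, t) (0, 1) := h.deriv
  rw [hd]; exact h

lemma contDiff_pX {n m : WithTop ℕ∞} {f : ℝ × ℝ → ℝ} (hf : ContDiff ℝ n f) (h : m + 1 ≤ n) :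
    ContDiff ℝ m (pX f) := by
  have hd : Differentiable ℝ f := (hf.of_le (le_trans le_add_self h)).differentiable one_ne_zero
  have he : pX f = fun p => fderiv ℝ f p (1, 0) := by
    funext p
    obtain ⟨a, b⟩ := p
    have hc : HasDerivAt (fun x' : ℝ => ((x' : ℝ), b)) ((1 : ℝ), (0 : ℝ)) a :=
      (hasDerivAt_id a).prodMk (hasDerivAt_const a b)
    have h2 := (hd (a, b)).hasFDerivAt.comp_hasDerivAt a hc
    simpa [pX, Function.comp_def] using h2.deriv
  rw [he]
  exact (hf.fderiv_right h).clm_apply contDiff_const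

/-- if u is a C³ solution of the mCH equation with ω = 2, then
`q = √(m²+1)` satisfies the conservation law `q_t + (q(u² - u_x²))_x = 0`. -/
theorem mCH_conservation_law (u : ℝ × ℝ → ℝ) (hu : ContDiff ℝ 3 u)
    (hmch : ∀ p : ℝ × ℝ,
      pT (mOf u) p
        + pX (fun p' => (u p' ^ 2 - (pX u p') ^ 2) * mOf u p') p
        + 2 * pX u p = 0) :
    ∀ p : ℝ × ℝ,
      pT (qOf u) p
        + pX (fun p' => qOf u p' * (u p' ^ 2 - (pX u p') ^ 2)) p = 0 := by
  have hux : ContDiff ℝ 2 (pX u) := contDiff_pX hu (by norm_num)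
  have huxx : ContDiff ℝ 1 (pX (pX u)) := contDiff_pX hux (by norm_num)
  have hm : ContDiff ℝ 1 (mOf u) := (hu.of_le (by norm_num)).sub huxx
  have hu1 : Differentiable ℝ u := hu.differentiable (by norm_num)
  have hux1 : Differentiable ℝ (pX u) := hux.differentiable (by norm_num)
  have hm1 : Differentiable ℝ (mOf u) := hm.differentiable (by norm_num)
  rintro ⟨x, t⟩
  set m := mOf u (x, t) with hm_def
  set mx := pX (mOf u) (x, t) with hmx_def
  set mt := pT (mOf u) (x, t) with hmt_def
  set U := u (x, t) with hU_def
  set ux := pX u (x, t) with hux_def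
  set uxx := pX (pX u) (x, t) with huxx_def
  set q := Real.sqrt (m ^ 2 + 1) with hq_def
  have hqpos : 0 < q := Real.sqrt_pos.mpr (by positivity)
  have hq2 : q ^ 2 = m ^ 2 + 1 := Real.sq_sqrt (by positivity)
  have h1 : HasDerivAt (fun x' => u (x', t)) ux x := hasDerivAt_pX u x t (hu1 _)
  have h2 : HasDerivAt (fun x' => pX u (x', t)) uxx x := hasDerivAt_pX (pX u) x t (hux1 _)
  have hmxd : HasDerivAt (fun x' => mOf u (x', t)) mx x := hasDerivAt_pX (mOf u) x t (hm1 _)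
  have hmtd : HasDerivAt (fun t' => mOf u (x, t')) mt t := hasDerivAt_pT (mOf u) x t (hm1 _)
  -- derivative of F = u² - ux² in x
  have hF : HasDerivAt (fun x' => u (x', t) ^ 2 - (pX u (x', t)) ^ 2)
      (2 * U * ux - 2 * ux * uxx) x := by
    have := ((h1.fun_pow 2).sub (h2.fun_pow 2))
    refine this.congr_deriv ?_
    rw [hU_def]
    push_cast
    ring
  -- derivative of q in x
  have hqx : HasDerivAt (fun x' => qOf u (x', t)) ((2 * m * mx) / (2 * q)) x := by
    have hinner : HasDerivAt (fun x' => (mOf u (x', t)) ^ 2 + 1) (2 * m * mx) x := by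
      have := (hmxd.fun_pow 2).add_const 1
      refine this.congr_deriv ?_
      rw [hm_def]
      push_cast
      ring
    have := hinner.sqrt (by positivity)
    simpa [qOf, hq_def] using this
  -- derivative of q in t
  have hqt : HasDerivAt (fun t' => qOf u (x, t')) ((2 * m * mt) / (2 * q)) t := by
    have hinner : HasDerivAt (fun t' => (mOf u (x, t')) ^ 2 + 1) (2 * m * mt) t := by
      have := (hmtd.fun_pow 2).add_const 1
      refine this.congr_deriv ?_
      rw [hm_def]
      push_cast
      ring
    have := hinner.sqrt (by positivity)
    simpa [qOf, hq_def] using this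
  -- evaluate the pX in the hypothesis
  have hC : pX (fun p' => (u p' ^ 2 - (pX u p') ^ 2) * mOf u p') (x, t)
      = (2 * U * ux - 2 * ux * uxx) * m + (U ^ 2 - ux ^ 2) * mx := by
    have := (hF.fun_mul hmxd).deriv
    simpa [pX, hm_def, hU_def, hux_def] using this
  -- evaluate the terms in the goal
  have hA : pT (qOf u) (x, t) = (2 * m * mt) / (2 * q) := by
    have := hqt.deriv
    simpa [pT] using this
  have hB : pX (fun p' => qOf u p' * (u p' ^ 2 - (pX u p') ^ 2)) (x, t)
      = ((2 * m * mx) / (2 * q)) * (U ^ 2 - ux ^ 2) + q * (2 * U * ux - 2 * ux * uxx) := by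
    have := (hqx.fun_mul hF).deriv
    have hqval : qOf u (x, t) = q := by simp [qOf, hq_def, hm_def]
    simpa [pX, hqval, hU_def, hux_def] using this
  have hE := hmch (x, t)
  rw [hC] at hE
  rw [hA, hB]
  have hmU : m = U - uxx := by simp [hm_def, mOf, hU_def, huxx_def]
  have hq0 : q ≠ 0 := ne_of_gt hqpos
  rw [← hmt_def, ← hux_def] at hE
  field_simp
  linear_combination m * hE + (2 * U * ux - 2 * ux * uxx) * hq2 + (-(2 * ux)) * hmU
end

section
/- Let β₀, η₀ ∈ ℂ with β₀² − η₀² = 1 and η₀ ≠ 0, and set M₀ := [[β₀, η₀],[η₀, β₀]]. Let N be a 2×2 complex matrix with det N = 1 satisfying N = M₀ σ₃ N σ₃. Then f₀ := N₁₁ is nonzero and N = [[f₀, η₀/(2f₀)],[(β₀ − 1)f₀/η₀, (β₀ + 1)/(2f₀)]]. -/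
open Matrix

/-- The Pauli matrix σ₃. -/
def sigma3 : Matrix (Fin 2) (Fin 2) ℂ := !![1, 0; 0, -1]

/-- structure of M(i) forced by the symmetry N = M₀σ₃Nσ₃ and
det N = 1, where M₀ = [[β₀,η₀],[η₀,β₀]] with β₀² - η₀² = 1 and η₀ ≠ 0. -/
theorem M_at_i_structure (β₀ η₀ : ℂ) (hrel : β₀ ^ 2 - η₀ ^ 2 = 1)
    (hη : η₀ ≠ 0) (N : Matrix (Fin 2) (Fin 2) ℂ) (hdet : N.det = 1)
    (hsym : N = !![β₀, η₀; η₀, β₀] * sigma3 * N * sigma3) :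
    N 0 0 ≠ 0 ∧
    N = !![N 0 0, η₀ / (2 * N 0 0);
           (β₀ - 1) * N 0 0 / η₀, (β₀ + 1) / (2 * N 0 0)] := by
  have h10 := congrFun (congrFun hsym 1) 0
  have h11 := congrFun (congrFun hsym 1) 1
  simp [sigma3, Matrix.mul_apply, Matrix.vecMul, dotProduct,
    Fin.sum_univ_succ] at h10 h11
  rw [Matrix.det_fin_two] at hdet
  have hβ1 : β₀ + 1 ≠ 0 := by
    intro h
    exact hη (pow_eq_zero_iff (n := 2) (by norm_num) |>.mp
      (by linear_combination (β₀ - 1) * h - hrel))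
  -- key identity 2 a d = β₀ + 1
  have h2ad : 2 * N 0 0 * N 1 1 = β₀ + 1 := by
    linear_combination (β₀ + 1) * hdet + N 0 1 * h10 + N 0 0 * h11
  have ha : N 0 0 ≠ 0 := by
    intro h
    exact hβ1 (by linear_combination -h2ad + 2 * N 1 1 * h)
  have hb : 2 * N 0 0 * N 0 1 = η₀ := by
    have : η₀ * (2 * N 0 0 * N 0 1) = η₀ * η₀ := by
      linear_combination 2 * N 0 0 * h11 + (β₀ - 1) * h2ad + hrel
    exact mul_left_cancel₀ hη this
  have hc : η₀ * N 1 0 = (β₀ - 1) * N 0 0 := by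
    have : (β₀ + 1) * (η₀ * N 1 0) = (β₀ + 1) * ((β₀ - 1) * N 0 0) := by
      linear_combination η₀ * h10 - N 0 0 * hrel
    exact mul_left_cancel₀ hβ1 this
  have h2a : (2 : ℂ) * N 0 0 ≠ 0 := mul_ne_zero two_ne_zero ha
  have hB : N 0 1 = η₀ / (2 * N 0 0) := by
    rw [eq_div_iff h2a]; linear_combination hb
  have hC : N 1 0 = (β₀ - 1) * N 0 0 / η₀ := by
    rw [eq_div_iff hη]; linear_combination hc
  have hD : N 1 1 = (β₀ + 1) / (2 * N 0 0) := by
    rw [eq_div_iff h2a]; linear_combination h2ad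
  refine ⟨ha, ?_⟩
  ext i j
  fin_cases i <;> fin_cases j
  · exact rfl
  · exact hB
  · exact hC
  · exact hD
end
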